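/- arXiv:1902.05155 — 2 statements merged into one kernel-verified Lean document; each statement's English description precedes it below -/
import Mathlib

section
/- For natural numbers $q \ge 1$ and integers $a$ with $\gcd(a,q)=1$, define $S(q,a,b) = \sum_{r=1}^q e^{2\pi i (a r^3 + b r)/q}$. Then for every $\varepsilon>0$, $\sum_{b=1}^q |S(q,a,b)|^4 \ll_\varepsilon q^{3+\varepsilon}$. -/
open Complex

/-- `e_q(z) = e^{2πiz/q}`. -/
noncomputable def eq' (q : ℕ) (z : ℤ) : ℂ :=
  Complex.exp (2 * Real.pi * Complex.I * z / q)

/-- The Gauss-Weyl sum `S(q,a,b) = ∑_{r=1}^q e_q(a r³ + b r)`. -/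
noncomputable def Ssum (q : ℕ) (a b : ℤ) : ℂ :=
  ∑ r ∈ Finset.Icc (1 : ℤ) q, eq' q (a * r^3 + b * r)

/-!
Expanding the fourth power and summing over `b` by orthogonality leaves `q` times a complete sum
over `x₁ + x₂ = y₁ + y₂`, where `x₁³ + x₂³ - y₁³ - y₂³ = -3 (x₁ - y₁) (x₂ - y₁) (x₁ + x₂)`.
Writing `x₁ = y₁ + u`, `x₂ = y₁ + v` makes the phase linear in `y₁`, so a second orthogonality
bounds the sum by `q² · #{(u, v) mod q : q ∣ 6uv}`. For fixed `u` there are at most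
`gcd(6u, q) ≤ 6 gcd(u, q)` such `v`, and `∑_u gcd(u, q) ≤ q d(q)`; the divisor bound
`d(q) ≪_ε q^ε` finishes. The exponential-sum part holds over any finite commutative ring with a
primitive additive character; `ZMod q` with `e_q` is the case at hand.
-/

open Finset

section CubicSum

variable {R : Type*} [CommRing R] [Fintype R] (ψ : AddChar R ℂ)

noncomputable def cubicSum (a b : R) : ℂ := ∑ x, ψ (a * x ^ 3 + b * x)

lemma norm_cubicSum_pow_four (a b : R) :
    ((‖cubicSum ψ a b‖ ^ 4 : ℝ) : ℂ) = ∑ x₁, ∑ x₂, ∑ y₁, ∑ y₂,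
      ψ (a * (x₁ ^ 3 + x₂ ^ 3 - y₁ ^ 3 - y₂ ^ 3) + b * (x₁ + x₂ - y₁ - y₂)) := by
  have hsq : ((‖cubicSum ψ a b‖ ^ 2 : ℝ) : ℂ) =
      ∑ x, ∑ y, ψ (a * (x ^ 3 - y ^ 3) + b * (x - y)) := by
    rw [Complex.ofReal_pow, ← Complex.mul_conj', cubicSum, map_sum, sum_mul_sum]
    refine sum_congr rfl fun x _ => sum_congr rfl fun y _ => ?_
    rw [← AddChar.map_neg_eq_conj, ← AddChar.map_add_eq_mul]
    ring_nf
  rw [show ‖cubicSum ψ a b‖ ^ 4 = (‖cubicSum ψ a b‖ ^ 2) ^ 2 by ring, Complex.ofReal_pow, hsq,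
    sq, sum_mul_sum]
  refine sum_congr rfl fun x₁ _ => sum_congr rfl fun x₂ _ => ?_
  rw [sum_mul_sum]
  refine sum_congr rfl fun y₁ _ => sum_congr rfl fun y₂ _ => ?_
  rw [← AddChar.map_add_eq_mul]
  ring_nf

variable [DecidableEq R] {ψ}

lemma sum_addChar_add_mul (hψ : ψ.IsPrimitive) (c l : R) :
    ∑ x, ψ (c + x * l) = if l = 0 then Fintype.card R * ψ c else 0 := by
  simp only [AddChar.map_add_eq_mul, ← mul_sum, AddChar.sum_mulShift _ hψ]
  split_ifs <;> ring

lemma sum_norm_cubicSum_pow_four_eq (hψ : ψ.IsPrimitive) (a : R) :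
    ((∑ b, ‖cubicSum ψ a b‖ ^ 4 : ℝ) : ℂ) = Fintype.card R * ∑ x₁, ∑ x₂, ∑ y,
      ψ (a * (x₁ ^ 3 + x₂ ^ 3 - y ^ 3 - (x₁ + x₂ - y) ^ 3)) := by
  simp only [Complex.ofReal_sum, norm_cubicSum_pow_four, mul_sum]
  rw [sum_comm]; refine sum_congr rfl fun x₁ _ => ?_
  rw [sum_comm]; refine sum_congr rfl fun x₂ _ => ?_
  rw [sum_comm]; refine sum_congr rfl fun y₁ _ => ?_
  rw [sum_comm]
  simp only [sum_addChar_add_mul hψ, sub_eq_zero, Fintype.sum_ite_eq]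

lemma sum_addChar_cube_defect_eq (hψ : ψ.IsPrimitive) (a : R) :
    ∑ x₁, ∑ x₂, ∑ y, ψ (a * (x₁ ^ 3 + x₂ ^ 3 - y ^ 3 - (x₁ + x₂ - y) ^ 3)) =
      Fintype.card R * ∑ u, ∑ v,
        if 6 * a * u * v = 0 then ψ (-3 * a * u * v * (u + v)) else 0 := by
  -- with `x₁ = y + u` and `x₂ = y + v` the phase becomes linear in `y`
  have hphase : ∀ y u v, a * ((y + u) ^ 3 + (y + v) ^ 3 - y ^ 3 - (y + u + (y + v) - y) ^ 3) =
      -3 * a * u * v * (u + v) + y * -(6 * a * u * v) := by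
    intro y u v
    ring
  calc _ = ∑ y, ∑ x₁, ∑ x₂, ψ (a * (x₁ ^ 3 + x₂ ^ 3 - y ^ 3 - (x₁ + x₂ - y) ^ 3)) :=
        (sum_congr rfl fun _ _ => sum_comm).trans sum_comm
    _ = ∑ y, ∑ u, ∑ v, ψ (-3 * a * u * v * (u + v) + y * -(6 * a * u * v)) := by
        refine sum_congr rfl fun y _ => ?_
        rw [← Equiv.sum_comp (Equiv.addLeft y)]
        refine sum_congr rfl fun u _ => ?_
        rw [← Equiv.sum_comp (Equiv.addLeft y)]
        simp only [Equiv.coe_addLeft, hphase]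
    _ = _ := by
        rw [sum_comm]
        simp only [mul_sum]
        refine sum_congr rfl fun u _ => ?_
        rw [sum_comm]
        refine sum_congr rfl fun v _ => ?_
        rw [sum_addChar_add_mul hψ]
        simp only [neg_eq_zero, mul_ite, mul_zero]

lemma sum_norm_cubicSum_pow_four_le (hψ : ψ.IsPrimitive) {a : R} (ha : IsUnit a) :
    ∑ b, ‖cubicSum ψ a b‖ ^ 4 ≤ Fintype.card R ^ 2 * #{p : R × R | 6 * p.1 * p.2 = 0} := by
  have hzero : ∀ u v : R, 6 * a * u * v = 0 ↔ 6 * u * v = 0 := fun u v => by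
    rw [show 6 * a * u * v = a * (6 * u * v) by ring, ha.mul_right_eq_zero]
  calc ∑ b, ‖cubicSum ψ a b‖ ^ 4 = ‖((∑ b, ‖cubicSum ψ a b‖ ^ 4 : ℝ) : ℂ)‖ := by
        rw [Complex.norm_real, Real.norm_of_nonneg (by positivity)]
    _ = Fintype.card R ^ 2 * ‖∑ u, ∑ v,
          if 6 * a * u * v = 0 then ψ (-3 * a * u * v * (u + v)) else 0‖ := by
        rw [sum_norm_cubicSum_pow_four_eq hψ, sum_addChar_cube_defect_eq hψ, ← mul_assoc,
          ← sq, norm_mul, norm_pow, Complex.norm_natCast]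
    _ ≤ Fintype.card R ^ 2 * ∑ u : R, ∑ v : R, if 6 * u * v = 0 then (1 : ℝ) else 0 := by
        gcongr
        refine (norm_sum_le _ _).trans (sum_le_sum fun u _ => (norm_sum_le _ _).trans
          (sum_le_sum fun v _ => ?_))
        simp only [hzero]
        split_ifs <;> simp
    _ = Fintype.card R ^ 2 * #{p : R × R | 6 * p.1 * p.2 = 0} := by
        rw [← Fintype.sum_prod_type' (fun u v => if 6 * u * v = 0 then (1 : ℝ) else 0), sum_boole]

end CubicSum

lemma card_nsmul_eq_zero_le_gcd {G : Type*} [AddGroup G] [Fintype G] [DecidableEq G]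
    [IsAddCyclic G] (n : ℕ) : #{g : G | n • g = 0} ≤ n.gcd (Fintype.card G) := by
  have h : ∀ g : G, n • g = 0 ↔ n.gcd (Fintype.card G) • g = 0 := fun g => by
    simp only [← addOrderOf_dvd_iff_nsmul_eq_zero, Nat.dvd_gcd_iff, addOrderOf_dvd_card, and_true]
  simp only [h]
  exact IsAddCyclic.card_nsmul_eq_zero_le (Nat.gcd_pos_of_pos_right _ Fintype.card_pos)

lemma sum_Ioc_gcd_le (q : ℕ) : ∑ n ∈ Ioc 0 q, n.gcd q ≤ q * #q.divisors := by
  rcases eq_or_ne q 0 with rfl | hq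
  · simp
  calc ∑ n ∈ Ioc 0 q, n.gcd q ≤ ∑ n ∈ Ioc 0 q, ∑ d ∈ q.divisors, if d ∣ n then d else 0 := by
        refine sum_le_sum fun n _ => ?_
        have hmem : n.gcd q ∈ q.divisors := Nat.mem_divisors.2 ⟨Nat.gcd_dvd_right n q, hq⟩
        simpa [Nat.gcd_dvd_left] using
          single_le_sum (f := fun d => if d ∣ n then d else 0) (fun _ _ => Nat.zero_le _) hmem
    _ = ∑ d ∈ q.divisors, q / d * d := by
        rw [sum_comm]
        refine sum_congr rfl fun d _ => ?_
        rw [← sum_filter, sum_const, smul_eq_mul, Nat.Ioc_filter_dvd_card_eq_div]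
    _ ≤ ∑ _d ∈ q.divisors, q := sum_le_sum fun d _ => Nat.div_mul_le_self q d
    _ = q * #q.divisors := by rw [sum_const, smul_eq_mul, mul_comm]

lemma sum_comp_eq_sum_univ_of_injOn {ι α M : Type*} [Fintype α] [AddCommMonoid M]
    {s : Finset ι} {g : ι → α} (hg : Set.InjOn g s) (hs : #s = Fintype.card α) (f : α → M) :
    ∑ i ∈ s, f (g i) = ∑ x, f x :=
  sum_nbij g (fun _ _ => mem_univ _) hg
    (surjOn_of_injOn_of_card_le g (fun _ _ => mem_univ _) hg (by simp [hs])) fun _ _ => rfl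

namespace ZMod

lemma intCast_injOn_Icc {q : ℕ} : Set.InjOn (Int.cast : ℤ → ZMod q) (Icc (1 : ℤ) q : Set ℤ) := by
  intro r hr s hs h
  simp only [coe_Icc, Set.mem_Icc] at hr hs
  have hdvd := (intCast_eq_intCast_iff_dvd_sub r s q).1 h
  have := Int.eq_zero_of_abs_lt_dvd hdvd (abs_sub_lt_iff.2 ⟨by omega, by omega⟩)
  omega

variable {q : ℕ} [NeZero q]

lemma sum_Icc_intCast {M : Type*} [AddCommMonoid M] (f : ZMod q → M) :
    ∑ r ∈ Icc (1 : ℤ) q, f r = ∑ x, f x :=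
  sum_comp_eq_sum_univ_of_injOn intCast_injOn_Icc (by simp) f

lemma sum_Ioc_natCast {M : Type*} [AddCommMonoid M] (f : ZMod q → M) :
    ∑ n ∈ Ioc 0 q, f n = ∑ x, f x := by
  refine sum_comp_eq_sum_univ_of_injOn (fun m hm n hn h => ?_) (by simp) f
  simp only [coe_Ioc, Set.mem_Ioc] at hm hn
  have := intCast_injOn_Icc (q := q) (x₁ := m) (x₂ := n) (by simp; omega) (by simp; omega)
    (by simpa using h)
  omega

lemma card_six_mul_mul_eq_zero_le :
    #{p : ZMod q × ZMod q | 6 * p.1 * p.2 = 0} ≤ 6 * q * #q.divisors := by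
  have hfiber : ∀ n : ℕ, #{v : ZMod q | 6 * (n : ZMod q) * v = 0} ≤ 6 * n.gcd q := fun n => by
    have hdvd : (6 * n).gcd q ∣ 6 * n.gcd q := by
      simpa only [Nat.gcd_mul_left] using Nat.gcd_dvd_gcd_mul_left_right (6 * n) q 6
    have hpos : 0 < 6 * n.gcd q :=
      Nat.mul_pos (by norm_num) (Nat.gcd_pos_of_pos_right n (NeZero.pos q))
    have h := card_nsmul_eq_zero_le_gcd (G := ZMod q) (6 * n)
    simp only [nsmul_eq_mul, Nat.cast_mul, Nat.cast_ofNat, card] at h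
    exact h.trans (Nat.le_of_dvd hpos hdvd)
  calc #{p : ZMod q × ZMod q | 6 * p.1 * p.2 = 0}
      = ∑ u : ZMod q, #{v : ZMod q | 6 * u * v = 0} := by
        simp only [card_filter, ← Fintype.sum_prod_type']
    _ = ∑ n ∈ Ioc 0 q, #{v : ZMod q | 6 * (n : ZMod q) * v = 0} :=
        (sum_Ioc_natCast fun u => #{v : ZMod q | 6 * u * v = 0}).symm
    _ ≤ ∑ n ∈ Ioc 0 q, 6 * n.gcd q := sum_le_sum fun n _ => hfiber n
    _ ≤ 6 * q * #q.divisors := by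
        rw [← mul_sum, mul_assoc]
        exact Nat.mul_le_mul_left 6 (sum_Ioc_gcd_le q)

end ZMod

section DivisorBound

variable {ε : ℝ}

lemma add_one_le_mul_two_rpow (hε : 0 < ε) (k : ℕ) :
    (k : ℝ) + 1 ≤ (1 + (ε * Real.log 2)⁻¹) * 2 ^ (k * ε) := by
  set δ := ε * Real.log 2
  have hδ : 0 < δ := mul_pos hε (Real.log_pos one_lt_two)
  have hexp : 1 + k * δ ≤ (2 : ℝ) ^ ((k : ℝ) * ε) := by
    rw [Real.rpow_def_of_pos two_pos]
    linarith [Real.add_one_le_exp (Real.log 2 * (k * ε))]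
  have hexpand : (1 + δ⁻¹) * (1 + k * δ) = k + 1 + (k * δ + δ⁻¹) := by
    field_simp
    ring
  calc (k : ℝ) + 1 ≤ (1 + δ⁻¹) * (1 + k * δ) := by
        rw [hexpand]
        linarith [show 0 ≤ k * δ + δ⁻¹ by positivity]
    _ ≤ (1 + δ⁻¹) * 2 ^ (k * ε) := by gcongr

lemma add_one_le_pow_of_two_le (k : ℕ) {x : ℝ} (hx : 2 ≤ x) : (k : ℝ) + 1 ≤ x ^ k :=
  calc (k : ℝ) + 1 = 1 + k * 1 := by ring
    _ ≤ (1 + 1) ^ k := one_add_mul_le_pow (by norm_num) k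
    _ ≤ x ^ k := pow_le_pow_left₀ (by norm_num) (by linarith) k

lemma add_one_le_mul_pow_rpow (hε : 0 < ε) {x : ℝ} (hx : 2 ≤ x) (k : ℕ) :
    (k : ℝ) + 1 ≤ (if x < 2 ^ ε⁻¹ then 1 + (ε * Real.log 2)⁻¹ else 1) * (x ^ k) ^ ε := by
  have hx0 : 0 ≤ x := by linarith
  split_ifs with hsmall
  · calc (k : ℝ) + 1 ≤ (1 + (ε * Real.log 2)⁻¹) * 2 ^ (k * ε) := add_one_le_mul_two_rpow hε k
      _ ≤ (1 + (ε * Real.log 2)⁻¹) * (x ^ k) ^ ε := by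
        rw [← Real.rpow_natCast, ← Real.rpow_mul hx0]
        gcongr
  · have hxε : 2 ≤ x ^ ε := by
      calc (2 : ℝ) = (2 ^ ε⁻¹) ^ ε := (Real.rpow_inv_rpow zero_le_two hε.ne').symm
        _ ≤ x ^ ε := by gcongr; exact not_lt.1 hsmall
    rw [one_mul, ← Real.rpow_natCast, ← Real.rpow_mul hx0, mul_comm, Real.rpow_mul hx0,
      Real.rpow_natCast]
    exact add_one_le_pow_of_two_le k hxε

theorem card_divisors_le_mul_rpow (hε : 0 < ε) :
    ∃ C : ℝ, ∀ n : ℕ, n ≠ 0 → (#n.divisors : ℝ) ≤ C * (n : ℝ) ^ ε := by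
  set B := 1 + (ε * Real.log 2)⁻¹
  set T := ⌈(2 : ℝ) ^ ε⁻¹⌉₊
  have hB : 1 ≤ B := le_add_of_nonneg_right (inv_nonneg.2 (mul_pos hε (Real.log_pos one_lt_two)).le)
  refine ⟨B ^ T, fun n hn => ?_⟩
  -- each of the fewer than `T` primes below `2 ^ ε⁻¹` costs a factor `B`, larger ones cost nothing
  set c : ℕ → ℝ := fun p => if (p : ℝ) < 2 ^ ε⁻¹ then B else 1
  have hc : ∏ p ∈ n.primeFactors, c p ≤ B ^ T := by
    rw [prod_ite, prod_const, prod_const, one_pow, mul_one]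
    refine pow_le_pow_right₀ hB ((card_le_card fun p hp => ?_).trans (card_range T).le)
    exact mem_range.2 (by exact_mod_cast (mem_filter.1 hp).2.trans_le (Nat.le_ceil _))
  have hnε : (n : ℝ) ^ ε = ∏ p ∈ n.primeFactors, ((p : ℝ) ^ n.factorization p) ^ ε := by
    rw [Real.finsetProd_rpow _ _ fun p _ => by positivity]
    congr 1
    exact_mod_cast (Nat.prod_factorization_pow_eq_self hn).symm
  calc (#n.divisors : ℝ) = ∏ p ∈ n.primeFactors, ((n.factorization p : ℝ) + 1) := by
        rw [Nat.card_divisors hn]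
        push_cast
        rfl
    _ ≤ ∏ p ∈ n.primeFactors, c p * ((p : ℝ) ^ n.factorization p) ^ ε :=
        prod_le_prod (fun _ _ => by positivity) fun p hp => add_one_le_mul_pow_rpow hε
          (by exact_mod_cast (Nat.prime_of_mem_primeFactors hp).two_le) _
    _ = (∏ p ∈ n.primeFactors, c p) * (n : ℝ) ^ ε := by rw [prod_mul_distrib, hnε]
    _ ≤ B ^ T * (n : ℝ) ^ ε := by gcongr

end DivisorBound

lemma eq'_eq_stdAddChar (q : ℕ) [NeZero q] (z : ℤ) : eq' q z = ZMod.stdAddChar (z : ZMod q) :=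
  (ZMod.stdAddChar_coe z).symm

lemma Ssum_eq_cubicSum (q : ℕ) [NeZero q] (a b : ℤ) :
    Ssum q a b = cubicSum ZMod.stdAddChar (a : ZMod q) b := by
  rw [Ssum, cubicSum, ← ZMod.sum_Icc_intCast]
  refine sum_congr rfl fun r _ => ?_
  rw [eq'_eq_stdAddChar]
  push_cast
  rfl

theorem stmt_5 :
    ∀ ε : ℝ, 0 < ε → ∃ C : ℝ, ∀ q : ℕ, 1 ≤ q → ∀ a : ℤ, Int.gcd a q = 1 →
      ∑ b ∈ Finset.Icc (1 : ℤ) q, ‖Ssum q a b‖^4 ≤ C * (q : ℝ) ^ ((3 : ℝ) + ε) := by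
  intro ε hε
  obtain ⟨C, hC⟩ := card_divisors_le_mul_rpow hε
  refine ⟨6 * C, fun q hq a ha => ?_⟩
  have : NeZero q := ⟨by omega⟩
  have hunit : IsUnit (a : ZMod q) := (ZMod.coe_int_isUnit_iff_isCoprime a q).2
    (Int.isCoprime_iff_gcd_eq_one.2 (by rwa [Int.gcd_comm]))
  calc ∑ b ∈ Icc (1 : ℤ) q, ‖Ssum q a b‖ ^ 4
      = ∑ b : ZMod q, ‖cubicSum ZMod.stdAddChar (a : ZMod q) b‖ ^ 4 := by
        simp only [Ssum_eq_cubicSum]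
        exact ZMod.sum_Icc_intCast fun b => ‖cubicSum ZMod.stdAddChar (a : ZMod q) b‖ ^ 4
    _ ≤ q ^ 2 * (6 * q * #q.divisors : ℕ) := by
        refine (sum_norm_cubicSum_pow_four_le (ZMod.isPrimitive_stdAddChar q) hunit).trans ?_
        rw [ZMod.card]
        gcongr
        exact ZMod.card_six_mul_mul_eq_zero_le
    _ ≤ q ^ 2 * (6 * q * (C * (q : ℝ) ^ ε)) := by
        push_cast
        gcongr
        exact hC q (by omega)
    _ = 6 * C * (q : ℝ) ^ ((3 : ℝ) + ε) := by
        rw [Real.rpow_add (by positivity), show (3 : ℝ) = (3 : ℕ) by norm_num, Real.rpow_natCast]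
        ring
end

section
/- For a natural number $q\ge 1$ and an integer $a$ with $\gcd(a,q)=1$, the number of pairs $(u,v)$ of residues modulo $q$ such that $q$ divides $6uv$ is $O_\varepsilon(q^{1+\varepsilon})$ for every $\varepsilon>0$. -/
/-!
For fixed `u`, the `v` with `q ∣ 6uv` are the multiples of `q / gcd(6u, q)`, so there are
`gcd(6u, q) ≤ 6 gcd(u, q)` of them, and `∑_{u<q} gcd(u, q) ≤ ∑_{d ∣ q} d · (q / d) = q τ(q)`.
The divisor bound `τ(q) ≪_ε q^ε` comes from `τ(q) q^(-ε) = ∏_{p^k ∥ q} (k + 1) p^(-kε)`: a factor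
is at most `1` once `p^ε ≥ 2`, and is bounded in terms of `ε` for the finitely many other `p`.
-/

open Finset

lemma natCast_add_one_le_pow_of_two_le {c : ℝ} (hc : 2 ≤ c) (k : ℕ) : (k : ℝ) + 1 ≤ c ^ k := by
  have := one_add_mul_le_pow (a := c - 1) (by linarith) k
  simp only [add_sub_cancel] at this
  nlinarith [(k.cast_nonneg : (0 : ℝ) ≤ k)]

lemma natCast_add_one_le_mul_pow {c : ℝ} (hc : 1 < c) (k : ℕ) :
    (k : ℝ) + 1 ≤ (1 + (c - 1)⁻¹) * c ^ k := by
  have hbern := one_add_mul_le_pow (a := c - 1) (by linarith) k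
  simp only [add_sub_cancel] at hbern
  have hc' : 0 < c - 1 := by linarith
  have hexpand : (1 + (c - 1)⁻¹) * (1 + k * (c - 1)) = k + 1 + (k * (c - 1) + (c - 1)⁻¹) := by
    field_simp
    ring
  calc (k : ℝ) + 1 ≤ (1 + (c - 1)⁻¹) * (1 + k * (c - 1)) := by
        rw [hexpand]
        have : 0 ≤ (k : ℝ) * (c - 1) := by positivity
        linarith [inv_pos.2 hc']
    _ ≤ (1 + (c - 1)⁻¹) * c ^ k := by gcongr

lemma Nat.cast_rpow_eq_prod_primeFactors {n : ℕ} (hn : n ≠ 0) (ε : ℝ) :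
    (n : ℝ) ^ ε = ∏ p ∈ n.primeFactors, ((p : ℝ) ^ ε) ^ n.factorization p := by
  simp_rw [Real.rpow_pow_comm (Nat.cast_nonneg _)]
  rw [Real.finsetProd_rpow _ _ (fun p _ => by positivity)]
  exact_mod_cast congrArg (fun m : ℕ => (m : ℝ) ^ ε) (Nat.prod_primeFactors_pow_factorization hn)

theorem Nat.exists_card_divisors_le_mul_rpow {ε : ℝ} (hε : 0 < ε) :
    ∃ C : ℝ, ∀ n : ℕ, n ≠ 0 → (#n.divisors : ℝ) ≤ C * (n : ℝ) ^ ε := by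
  set B : ℝ := 1 + ((2 : ℝ) ^ ε - 1)⁻¹
  set N : ℕ := ⌈(2 : ℝ) ^ ε⁻¹⌉₊
  have hB : 1 ≤ B := by
    have : (1 : ℝ) < 2 ^ ε := Real.one_lt_rpow (by norm_num) hε
    simp only [B, le_add_iff_nonneg_right, inv_nonneg, sub_nonneg, this.le]
  -- a prime `p ≥ N` has `p ^ ε ≥ 2`; each of the fewer than `N` other primes costs a factor `B`
  have hlocal : ∀ p : ℕ, p.Prime → ∀ k : ℕ,
      (k : ℝ) + 1 ≤ (if p < N then B else 1) * ((p : ℝ) ^ ε) ^ k := by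
    intro p hp k
    split_ifs with hpN
    · calc (k : ℝ) + 1 ≤ B * ((2 : ℝ) ^ ε) ^ k :=
            natCast_add_one_le_mul_pow (Real.one_lt_rpow (by norm_num) hε) k
        _ ≤ B * ((p : ℝ) ^ ε) ^ k := by
            gcongr
            exact_mod_cast hp.two_le
    · rw [one_mul]
      refine natCast_add_one_le_pow_of_two_le ?_ k
      calc (2 : ℝ) = ((2 : ℝ) ^ ε⁻¹) ^ ε := by
            rw [← Real.rpow_mul (by norm_num), inv_mul_cancel₀ hε.ne', Real.rpow_one]
        _ ≤ (p : ℝ) ^ ε := by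
            gcongr
            exact (Nat.le_ceil _).trans (by exact_mod_cast not_lt.1 hpN)
  refine ⟨B ^ N, fun n hn => ?_⟩
  have hsmall : ∏ p ∈ n.primeFactors, (if p < N then B else 1) ≤ B ^ N := by
    rw [prod_ite, prod_const, prod_const_one, mul_one]
    refine pow_le_pow_right₀ hB ((card_le_card fun p hp => ?_).trans (card_range N).le)
    exact mem_range.2 (mem_filter.1 hp).2
  rw [Nat.card_divisors hn, Nat.cast_rpow_eq_prod_primeFactors hn]
  push_cast
  calc ∏ p ∈ n.primeFactors, ((n.factorization p : ℝ) + 1)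
      ≤ ∏ p ∈ n.primeFactors, (if p < N then B else 1) * ((p : ℝ) ^ ε) ^ n.factorization p :=
        prod_le_prod (fun _ _ => by positivity)
          (fun p hp => hlocal p (Nat.prime_of_mem_primeFactors hp) _)
    _ ≤ B ^ N * ∏ p ∈ n.primeFactors, ((p : ℝ) ^ ε) ^ n.factorization p := by
        rw [prod_mul_distrib]
        gcongr

namespace Nat

lemma card_filter_range_dvd_le {d q : ℕ} (hdq : d ∣ q) : #{u ∈ range q | d ∣ u} ≤ q / d := by
  calc #{u ∈ range q | d ∣ u} ≤ #((range (q / d)).image (d * ·)) := by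
        refine card_le_card fun u hu => ?_
        obtain ⟨hlt, k, rfl⟩ := mem_filter.1 hu
        refine mem_image.2 ⟨k, mem_range.2 ?_, rfl⟩
        rw [Nat.lt_div_iff_mul_lt' hdq]
        exact mem_range.1 hlt
    _ ≤ q / d := Finset.card_image_le.trans (card_range _).le

lemma card_filter_range_dvd_mul_le_gcd (c : ℕ) {q : ℕ} (hq : q ≠ 0) :
    #{v ∈ range q | q ∣ c * v} ≤ c.gcd q := by
  have hsub : {v ∈ range q | q ∣ c * v} ⊆ {v ∈ range q | q / q.gcd c ∣ v} := by
    refine monotone_filter_right _ fun v _ hv => ?_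
    have : c * v ≡ c * 0 [MOD q] := by rw [mul_zero]; exact Nat.modEq_zero_iff_dvd.2 hv
    exact Nat.modEq_zero_iff_dvd.1 (Nat.ModEq.cancel_left_div_gcd (Nat.pos_of_ne_zero hq) this)
  calc #{v ∈ range q | q ∣ c * v} ≤ q / (q / q.gcd c) :=
        (card_le_card hsub).trans
          (card_filter_range_dvd_le (Nat.div_dvd_of_dvd (q.gcd_dvd_left c)))
    _ = c.gcd q := by
        rw [Nat.div_div_self (q.gcd_dvd_left c) hq, Nat.gcd_comm]

lemma sum_range_gcd_le (q : ℕ) : ∑ u ∈ range q, u.gcd q ≤ q * #q.divisors := by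
  calc ∑ u ∈ range q, u.gcd q ≤ ∑ u ∈ range q, ∑ d ∈ q.divisors with d ∣ u, d := by
        refine sum_le_sum fun u hu => single_le_sum (f := id) (fun _ _ => Nat.zero_le _) ?_
        have hq : q ≠ 0 := by rintro rfl; simp at hu
        exact mem_filter.2 ⟨Nat.mem_divisors.2 ⟨u.gcd_dvd_right q, hq⟩, u.gcd_dvd_left q⟩
    _ = ∑ d ∈ q.divisors, #{u ∈ range q | d ∣ u} * d := by
        simp_rw [sum_filter]
        rw [sum_comm]
        refine sum_congr rfl fun d _ => ?_
        rw [← sum_filter, sum_const, smul_eq_mul]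
    _ ≤ ∑ d ∈ q.divisors, q := by
        refine sum_le_sum fun d hd => ?_
        have hdq := (Nat.mem_divisors.1 hd).1
        calc #{u ∈ range q | d ∣ u} * d ≤ q / d * d :=
              Nat.mul_le_mul_right d (card_filter_range_dvd_le hdq)
          _ = q := Nat.div_mul_cancel hdq
    _ = q * #q.divisors := by rw [sum_const, smul_eq_mul, mul_comm]

lemma card_filter_range_prod_dvd_mul_mul_le {m : ℕ} (hm : m ≠ 0) (q : ℕ) :
    #{p ∈ range q ×ˢ range q | q ∣ m * p.1 * p.2} ≤ m * (q * #q.divisors) := by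
  calc #{p ∈ range q ×ˢ range q | q ∣ m * p.1 * p.2}
      = ∑ u ∈ range q, #{v ∈ range q | q ∣ m * u * v} := by
        simp only [card_filter, sum_product]
    _ ≤ ∑ u ∈ range q, (m * u).gcd q :=
        sum_le_sum fun u hu => card_filter_range_dvd_mul_le_gcd _ (by rintro rfl; simp at hu)
    _ ≤ ∑ u ∈ range q, m * u.gcd q := by
        refine sum_le_sum fun u hu => Nat.le_of_dvd ?_ ?_
        · have hq : 0 < q := by simp at hu; omega
          exact Nat.mul_pos (Nat.pos_of_ne_zero hm) (Nat.gcd_pos_of_pos_right _ hq)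
        · rw [← Nat.gcd_mul_left]
          exact Nat.gcd_dvd_gcd_of_dvd_right _ (dvd_mul_left q m)
    _ ≤ m * (q * #q.divisors) := by
        rw [← mul_sum]
        exact Nat.mul_le_mul_left m (sum_range_gcd_le q)

end Nat

theorem stmt_7 :
    ∀ ε : ℝ, 0 < ε → ∃ C : ℝ, ∀ q : ℕ, 1 ≤ q → ∀ a : ℤ, Int.gcd a q = 1 →
      (((Finset.range q ×ˢ Finset.range q).filter
          (fun p => q ∣ 6 * p.1 * p.2)).card : ℝ)
        ≤ C * (q : ℝ) ^ ((1 : ℝ) + ε) := by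
  intro ε hε
  obtain ⟨C, hC⟩ := Nat.exists_card_divisors_le_mul_rpow hε
  refine ⟨6 * C, fun q hq _ _ => ?_⟩
  have hq0 : (0 : ℝ) < q := by exact_mod_cast hq
  calc (#{p ∈ range q ×ˢ range q | q ∣ 6 * p.1 * p.2} : ℝ) ≤ 6 * (q * #q.divisors) := by
        exact_mod_cast Nat.card_filter_range_prod_dvd_mul_mul_le (by norm_num) q
    _ ≤ 6 * (q * (C * (q : ℝ) ^ ε)) := by
        gcongr
        exact hC q (by omega)
    _ = 6 * C * (q : ℝ) ^ ((1 : ℝ) + ε) := by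
        rw [Real.rpow_add hq0, Real.rpow_one]
        ring
end
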